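/- arXiv:2510.08093 — 3 statements merged into one kernel-verified Lean document; each statement's English description precedes it below -/
import Mathlib

section
/- The rational map f: P² ⇢ P² given by [x:y:z] ↦ [x²y + y²z : xyz : x²y + xy² + 2y²z + z²(x+y)] over the complex numbers is surjective, i.e., for every point p ∈ P² with coordinates not all zero, there exists [x:y:z] not in the indeterminacy locus with f([x:y:z]) = p. -/
/-!
For `b ≠ 0` the points `[x(ax - b) : ax - b : bx²]` satisfy `f0 = a·x³(ax - b)²`,
`f1 = b·x³(ax - b)²` and `f2 = c·x³(ax - b)² + x(ax - b)·quartic a b c x`, so every root `x ≠ 0`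
of the quartic with `ax ≠ b` gives a preimage of `[a:b:c]`. All roots qualify unless `a + b = 0`;
then the quartic factors as `a(x + 1)(ax³ + (a - c)x² + a)`, and the cubic factor has a root
`x ≠ -1`: it vanishes at `-1` only when `c = a`, where it is `a(x + 1)(x² - x + 1)`.
Points with `b = 0` have explicit preimages.
-/

/-- The three cubic components of the map
`[x:y:z] ↦ [x²y + y²z : xyz : x²y + xy² + 2y²z + z²(x+y)]`. -/
noncomputable def f0 (x y z : ℂ) : ℂ := x^2*y + y^2*z
noncomputable def f1 (x y z : ℂ) : ℂ := x*y*z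
noncomputable def f2 (x y z : ℂ) : ℂ := x^2*y + x*y^2 + 2*y^2*z + z^2*(x + y)

open Polynomial

lemma exists_eval_eq_zero_of_natDegree_eq {k : Type*} [Field k] [IsAlgClosed k] {p : k[X]}
    {n : ℕ} (hp : p.natDegree = n) (hn : n ≠ 0) : ∃ x, p.eval x = 0 :=
  IsAlgClosed.exists_root p fun h => hn (hp ▸ natDegree_eq_of_degree_eq_some h)

def HasPreimage (a b c : ℂ) : Prop :=
  ∃ x y z : ℂ, ∃ t : ℂ, t ≠ 0 ∧ f0 x y z = t * a ∧ f1 x y z = t * b ∧ f2 x y z = t * c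

lemma hasPreimage_of_middle_eq_zero {a c : ℂ} (h : (a, c) ≠ (0, 0)) : HasPreimage a 0 c := by
  by_cases ha : a = 0
  · subst ha
    have hc : c ≠ 0 := by simpa using h
    exact ⟨c, 0, c, c^2, pow_ne_zero 2 hc, by simp [f0], by simp [f1], by rw [f2]; ring⟩
  by_cases hca : c = a
  · subst hca
    exact ⟨0, c, -c, -c^2, by simpa using ha, by rw [f0]; ring, by simp [f1], by rw [f2]; ring⟩
  · exact ⟨a, c - a, 0, a * (c - a), mul_ne_zero ha (sub_ne_zero.2 hca),
      by rw [f0]; ring, by simp [f1], by rw [f2]; ring⟩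

def quartic (a b c x : ℂ) : ℂ :=
  b^2*x^4 + (a^2 + b^2 - a*c)*x^3 + (a^2 + b*c)*x^2 - (2*a*b + b^2)*x + b^2

lemma hasPreimage_of_quartic_eq_zero {a b c x : ℂ} (hx : x ≠ 0) (hxb : a*x - b ≠ 0)
    (h : quartic a b c x = 0) : HasPreimage a b c := by
  refine ⟨x * (a*x - b), a*x - b, b * x^2, x^3 * (a*x - b)^2,
    mul_ne_zero (pow_ne_zero 3 hx) (pow_ne_zero 2 hxb), by rw [f0]; ring, by rw [f1]; ring, ?_⟩
  rw [quartic] at h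
  rw [f2]
  linear_combination (x * (a*x - b)) * h

lemma quartic_neg (a c x : ℂ) :
    quartic a (-a) c x = a * (x + 1) * (a*x^3 + (a - c)*x^2 + a) := by
  rw [quartic]; ring

lemma ne_zero_of_quartic_eq_zero {a b c x : ℂ} (hb : b ≠ 0) (h : quartic a b c x = 0) :
    x ≠ 0 := by
  rintro rfl
  simp [quartic, hb] at h

lemma mul_sub_ne_zero_of_quartic_eq_zero {a b c x : ℂ} (hb : b ≠ 0) (hab : a + b ≠ 0)
    (h : quartic a b c x = 0) : a*x - b ≠ 0 := by
  intro hxb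
  have hx1 : b^2 * x^3 * (x + 1) = 0 := by
    rw [quartic] at h
    linear_combination h - ((a - c)*x^2 + (a + b)*x - b) * hxb
  have hx : x + 1 = 0 :=
    (mul_eq_zero.1 hx1).resolve_left
      (mul_ne_zero (pow_ne_zero 2 hb) (pow_ne_zero 3 (ne_zero_of_quartic_eq_zero hb h)))
  exact hab (by linear_combination a * hx - hxb)

lemma exists_cubic_root_ne_neg_one {a : ℂ} (c : ℂ) (ha : a ≠ 0) :
    ∃ x, a*x^3 + (a - c)*x^2 + a = 0 ∧ x + 1 ≠ 0 := by
  by_cases hca : c = a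
  · subst hca
    obtain ⟨x, hx⟩ := exists_eval_eq_zero_of_natDegree_eq (p := (X^2 - X + 1 : ℂ[X]))
      (by compute_degree!) two_ne_zero
    simp only [eval_add, eval_sub, eval_pow, eval_X, eval_one] at hx
    refine ⟨x, by linear_combination c * (x + 1) * hx, fun hx1 => ?_⟩
    have : (3 : ℂ) = 0 := by linear_combination hx - (x - 2) * hx1
    norm_num at this
  · obtain ⟨x, hx⟩ := exists_eval_eq_zero_of_natDegree_eq
      (p := C a * X^3 + C (a - c) * X^2 + C a) (by compute_degree!) three_ne_zero
    simp only [eval_add, eval_mul, eval_pow, eval_C, eval_X] at hx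
    refine ⟨x, hx, fun hx1 => hca ?_⟩
    linear_combination -hx + (a*x^2 - c*x + c) * hx1

lemma exists_quartic_root {a b c : ℂ} (hb : b ≠ 0) :
    ∃ x, x ≠ 0 ∧ a*x - b ≠ 0 ∧ quartic a b c x = 0 := by
  by_cases hab : a + b = 0
  · obtain rfl : b = -a := by linear_combination hab
    obtain ⟨x, hx, hx1⟩ := exists_cubic_root_ne_neg_one c (neg_ne_zero.1 hb)
    have h : quartic a (-a) c x = 0 := by rw [quartic_neg, hx, mul_zero]
    refine ⟨x, ne_zero_of_quartic_eq_zero hb h, fun hxb => ?_, h⟩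
    exact mul_ne_zero (neg_ne_zero.1 hb) hx1 (by linear_combination hxb)
  · obtain ⟨x, hx⟩ := exists_eval_eq_zero_of_natDegree_eq
      (p := C (b^2) * X^4 + C (a^2 + b^2 - a*c) * X^3 + C (a^2 + b*c) * X^2
        - C (2*a*b + b^2) * X + C (b^2)) (by compute_degree!) four_ne_zero
    have h : quartic a b c x = 0 := by
      simpa only [quartic, eval_add, eval_sub, eval_mul, eval_pow, eval_C, eval_X] using hx
    exact ⟨x, ne_zero_of_quartic_eq_zero hb h, mul_sub_ne_zero_of_quartic_eq_zero hb hab h, h⟩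

/-- The cubic rational map `f = [f0 : f1 : f2] : ℙ² ⇢ ℙ²` is surjective:
every point `[a:b:c]` of `ℙ²` (coordinates not all zero) has a preimage
`[x:y:z]` lying outside the indeterminacy locus (i.e. with `(f0,f1,f2)` not
all zero there, which is forced by the nonzero proportionality factor). -/
theorem cubic_map_surjective_quartic_case :
    ∀ a b c : ℂ, (a, b, c) ≠ (0, 0, 0) →
      ∃ x y z : ℂ, ∃ t : ℂ, t ≠ 0 ∧
        f0 x y z = t * a ∧ f1 x y z = t * b ∧ f2 x y z = t * c := by
  intro a b c h
  by_cases hb : b = 0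
  · subst hb
    exact hasPreimage_of_middle_eq_zero (by simpa using h)
  · obtain ⟨x, hx, hxb, hroot⟩ := exists_quartic_root (c := c) hb
    exact hasPreimage_of_quartic_eq_zero hx hxb hroot
end

section
/- The indeterminacy locus of the map [x:y:z] ↦ [x²y + y²z : xyz : x²y + xy² + 2y²z + xz² + yz²] on the complex projective plane consists exactly of the three coordinate points [1:0:0], [0:1:0], [0:0:1]. -/
/-! Since `xyz = 0`, a common zero lies on a coordinate line, and on each such line one of the
cubics restricts to a monomial `a²b` in the two remaining coordinates (`y²z` on `x = 0`, `xz²` on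
`y = 0`, `x²y` on `z = 0`), so a second coordinate vanishes. -/

lemma cubics_eq_zero_iff_two_coords_eq_zero {R : Type*} [CommRing R] [NoZeroDivisors R]
    (x y z : R) :
    (x^2*y + y^2*z = 0 ∧ x*y*z = 0 ∧ x^2*y + x*y^2 + 2*y^2*z + x*z^2 + y*z^2 = 0) ↔
      (y = 0 ∧ z = 0) ∨ (x = 0 ∧ z = 0) ∨ (x = 0 ∧ y = 0) := by
  constructor
  · rintro ⟨h₀, h₁, h₂⟩
    rw [mul_eq_zero, mul_eq_zero] at h₁
    obtain (rfl | rfl) | rfl := h₁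
    · have h : y ^ 2 * z = 0 := by linear_combination h₀
      obtain rfl | rfl : y = 0 ∨ z = 0 := (by simpa using h) <;> simp
    · have h : x * z ^ 2 = 0 := by linear_combination h₂
      obtain rfl | rfl : x = 0 ∨ z = 0 := (by simpa using h) <;> simp
    · have h : x ^ 2 * y = 0 := by linear_combination h₀
      obtain rfl | rfl : x = 0 ∨ y = 0 := (by simpa using h) <;> simp
  · rintro (⟨rfl, rfl⟩ | ⟨rfl, rfl⟩ | ⟨rfl, rfl⟩) <;> simp

lemma exists_coordinate_point_iff_two_coords_eq_zero {R : Type*} [Zero R] {x y z : R}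
    (h : (x, y, z) ≠ (0, 0, 0)) :
    (∃ t : R, t ≠ 0 ∧ ((x, y, z) = (t, 0, 0) ∨ (x, y, z) = (0, t, 0) ∨ (x, y, z) = (0, 0, t))) ↔
      (y = 0 ∧ z = 0) ∨ (x = 0 ∧ z = 0) ∨ (x = 0 ∧ y = 0) := by
  constructor
  · rintro ⟨t, -, h | h | h⟩ <;> simp_all [Prod.ext_iff]
  · rintro (⟨rfl, rfl⟩ | ⟨rfl, rfl⟩ | ⟨rfl, rfl⟩)
    · exact ⟨x, fun hx ↦ h (by rw [hx]), Or.inl rfl⟩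
    · exact ⟨y, fun hy ↦ h (by rw [hy]), Or.inr (Or.inl rfl)⟩
    · exact ⟨z, fun hz ↦ h (by rw [hz]), Or.inr (Or.inr rfl)⟩

/-- The indeterminacy locus of `[x:y:z] ↦ [x²y + y²z : xyz : x²y + xy² + 2y²z + xz² + yz²]`
on `ℙ²(ℂ)` consists exactly of the three coordinate points
`[1:0:0]`, `[0:1:0]`, `[0:0:1]`: a nonzero triple `(x,y,z)` is a common zero of the
three cubics iff it is a nonzero scalar multiple of one of `(1,0,0)`, `(0,1,0)`, `(0,0,1)`. -/
theorem indeterminacy_locus_three_points :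
    ∀ x y z : ℂ, (x, y, z) ≠ (0, 0, 0) →
      ((x^2*y + y^2*z = 0 ∧ x*y*z = 0 ∧ x^2*y + x*y^2 + 2*y^2*z + x*z^2 + y*z^2 = 0) ↔
        (∃ t : ℂ, t ≠ 0 ∧ ((x, y, z) = (t, 0, 0) ∨ (x, y, z) = (0, t, 0) ∨
          (x, y, z) = (0, 0, t)))) := by
  intro x y z h
  rw [cubics_eq_zero_iff_two_coords_eq_zero, exists_coordinate_point_iff_two_coords_eq_zero h]
end

section
/- For any complex numbers a, b, the system y = ax − x², x²y + xy² + 2y² + x + y = bxy has a solution with x ≠ 0. -/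
/-!
Dividing `x²y + xy² + 2y² + x + y - bxy` by `x` after substituting `y = ax - x²` leaves a
monic quartic in `x` whose constant, linear and quadratic coefficients `1 + a`,
`2a² - ab - 1`, `a² - 3a + b` cannot all vanish (the first two force `a = b = -1`, and then
the third is `3`). Over an algebraically closed field a polynomial with two nonzero
coefficients is not a monomial `c Xⁿ`, so it has a nonzero root; that root is the `x` sought.
-/

open Polynomial

theorem Polynomial.exists_isRoot_ne_zero_of_coeff_ne_zero {k : Type*} [Field k] [IsAlgClosed k]
    {p : k[X]} {i j : ℕ} (hij : i ≠ j) (hi : p.coeff i ≠ 0) (hj : p.coeff j ≠ 0) :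
    ∃ z, z ≠ 0 ∧ p.IsRoot z := by
  by_contra! hroots
  have hzero : p.roots = Multiset.replicate p.natDegree 0 := by
    rw [← IsAlgClosed.card_roots_eq_natDegree, Multiset.eq_replicate_card]
    intro z hz
    by_contra hz0
    exact hroots z hz0 (isRoot_of_mem_roots hz)
  have hmono : p = C p.leadingCoeff * X ^ p.natDegree := by
    conv_lhs => rw [← C_leadingCoeff_mul_prod_multiset_X_sub_C
      (IsAlgClosed.card_roots_eq_natDegree (p := p))]
    simp [hzero]
  rw [hmono, coeff_C_mul_X_pow] at hi hj
  exact hij ((ite_ne_right_iff.mp hi).1.trans (ite_ne_right_iff.mp hj).1.symm)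

noncomputable def preimageQuartic {R : Type*} [CommRing R] (a b : R) : R[X] :=
  X ^ 4 + C (1 - 2 * a) * X ^ 3 + C (a ^ 2 - 3 * a + b) * X ^ 2 + C (2 * a ^ 2 - a * b - 1) * X
    + C (1 + a)

section PreimageQuartic

variable {R : Type*} [CommRing R] (a b : R)

theorem preimageQuartic_coeff_four : (preimageQuartic a b).coeff 4 = 1 := by
  simp only [preimageQuartic, coeff_add, coeff_C_mul, coeff_X_pow, coeff_X, coeff_C]
  norm_num

theorem preimageQuartic_coeff_two : (preimageQuartic a b).coeff 2 = a ^ 2 - 3 * a + b := by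
  simp only [preimageQuartic, coeff_add, coeff_C_mul, coeff_X_pow, coeff_X, coeff_C]
  norm_num

theorem preimageQuartic_coeff_one : (preimageQuartic a b).coeff 1 = 2 * a ^ 2 - a * b - 1 := by
  simp only [preimageQuartic, coeff_add, coeff_C_mul, coeff_X_pow, coeff_X, coeff_C]
  norm_num

theorem preimageQuartic_coeff_zero : (preimageQuartic a b).coeff 0 = 1 + a := by
  simp only [preimageQuartic, coeff_add, coeff_C_mul, coeff_X_pow, coeff_X, coeff_C]
  norm_num

theorem exists_coeff_preimageQuartic_ne_zero_of_lt_four [CharZero R] :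
    ∃ i < 4, (preimageQuartic a b).coeff i ≠ 0 := by
  by_contra! h
  have h0 := (preimageQuartic_coeff_zero a b).symm.trans (h 0 (by norm_num))
  have h1 := (preimageQuartic_coeff_one a b).symm.trans (h 1 (by norm_num))
  have h2 := (preimageQuartic_coeff_two a b).symm.trans (h 2 (by norm_num))
  obtain rfl : a = -1 := by linear_combination h0
  obtain rfl : b = -1 := by linear_combination h1
  norm_num at h2

theorem mul_eval_preimageQuartic {x y : R} (hy : y = a * x - x ^ 2) :
    x * (preimageQuartic a b).eval x = x ^ 2 * y + x * y ^ 2 + 2 * y ^ 2 + x + y - b * x * y := by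
  simp only [preimageQuartic, eval_add, eval_mul, eval_pow, eval_X, eval_C]
  subst hy
  ring

end PreimageQuartic

/-- For any complex numbers `a, b`, the system `y = ax − x²`,
`x²y + xy² + 2y² + x + y = bxy` has a solution with `x ≠ 0`. -/
theorem preimage_system_solvable (a b : ℂ) :
    ∃ x y : ℂ, x ≠ 0 ∧ y = a*x - x^2 ∧
      x^2*y + x*y^2 + 2*y^2 + x + y = b*x*y := by
  obtain ⟨i, hi4, hi⟩ := exists_coeff_preimageQuartic_ne_zero_of_lt_four a b
  have h4 : (preimageQuartic a b).coeff 4 ≠ 0 := by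
    rw [preimageQuartic_coeff_four]
    exact one_ne_zero
  obtain ⟨z, hz0, hz⟩ := exists_isRoot_ne_zero_of_coeff_ne_zero hi4.ne hi h4
  refine ⟨z, a * z - z ^ 2, hz0, rfl, ?_⟩
  rw [← sub_eq_zero, ← mul_eval_preimageQuartic a b rfl, hz.eq_zero, mul_zero]
end
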